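/- Under the dissipativity condition ⟨x, f(x)⟩ ≤ -α̃‖x‖² + β̃ and with a symmetric spring of coefficient S > 0, the coupled Euler one-step map preserves dissipativity of the sum: there exist γ ∈ (0, α̃), constants and h₀ > 0 such that for all 0 < h < h₀ and all x_f, x_c ∈ ℝ^m and Gaussian increment w, writing y_c = x_c + S(x_f - x_c)h + f(x_c)h + w and y_f = x_f + S(x_c - x_f)h + f(x_f)h + w, one has (deterministically) ‖y_c‖² + ‖y_f‖² ≤ (1 - 2γh)(‖x_c‖² + ‖x_f‖²) + 8‖w‖² + C h + 2⟨x_c + x_f, w⟩ + lower-order cross terms bounded by constants times h(1 + ‖x_c‖² + ‖x_f‖²); in particular taking expectations with E[w] = 0, E‖w‖² = mh: E[‖y_c‖² + ‖y_f‖²] ≤ (1 - 2γh) E[‖x_c‖² + ‖x_f‖²] + C'h for some C' > 0. -/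

import Mathlib

/-!
Write each particle's drift step as `x + h v` with `v = S (y - x) + f x`, so that
`‖x + h v‖² = ‖x‖² + 2h⟪x, v⟫ + h²‖v‖²`. Summed over the two particles, the spring contributes
`-2hS‖x_c - x_f‖² ≤ 0` to the cross terms and dissipativity bounds the rest by
`-2hα̃ (‖x_c‖² + ‖x_f‖²) + 4hβ̃`. The Lipschitz bound gives
`‖v_c‖² + ‖v_f‖² ≤ (12S² + 3K²)(‖x_c‖² + ‖x_f‖²) + 6‖f 0‖²`, so for
`h ≤ α̃ / (12S² + 3K²)` the `h²` term eats at most half of the dissipation, whence `γ = α̃ / 2`.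
The noise adds `2⟪drift_c + drift_f, w⟫ + 2‖w‖²`, whose mean is `2mh` since `w` is centred and
independent of the drift.
-/

open MeasureTheory ProbabilityTheory Real

open scoped RealInnerProductSpace

section NormedGroup

variable {E : Type*} [SeminormedAddCommGroup E]

lemma norm_add_add_sq_le (u v z : E) :
    ‖u + v + z‖ ^ 2 ≤ 3 * (‖u‖ ^ 2 + ‖v‖ ^ 2 + ‖z‖ ^ 2) := by
  have := norm_add₃_le (a := u) (b := v) (c := z)
  nlinarith [norm_nonneg (u + v + z), sq_nonneg (‖u‖ - ‖v‖), sq_nonneg (‖u‖ - ‖z‖),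
    sq_nonneg (‖v‖ - ‖z‖)]

lemma norm_sub_sq_le_two_mul (a b : E) : ‖a - b‖ ^ 2 ≤ 2 * (‖a‖ ^ 2 + ‖b‖ ^ 2) := by
  nlinarith [norm_sub_le a b, norm_nonneg (a - b), sq_nonneg (‖a‖ - ‖b‖)]

end NormedGroup

section Deterministic

variable {E : Type*} [NormedAddCommGroup E] [InnerProductSpace ℝ E]

lemma norm_add_smul_sq (x v : E) (h : ℝ) :
    ‖x + h • v‖ ^ 2 = ‖x‖ ^ 2 + 2 * h * ⟪x, v⟫ + h ^ 2 * ‖v‖ ^ 2 := by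
  rw [norm_add_sq_real, real_inner_smul_right, norm_smul, mul_pow, norm_eq_abs, sq_abs]
  ring

lemma inner_smul_sub_add_inner_smul_sub (S : ℝ) (a b : E) :
    ⟪a, S • (b - a)⟫ + ⟪b, S • (a - b)⟫ = -(S * ‖a - b‖ ^ 2) := by
  rw [norm_sub_sq_real]
  simp only [real_inner_smul_right, inner_sub_right, real_inner_self_eq_norm_sq]
  rw [real_inner_comm a b]
  ring

variable {f : E → E} {K α β S h : ℝ}

lemma norm_smul_sub_add_sq_le (hlip : ∀ x y, ‖f x - f y‖ ≤ K * ‖x - y‖) (a b : E) :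
    ‖S • (b - a) + f a‖ ^ 2 ≤ 3 * (S ^ 2 * ‖a - b‖ ^ 2 + K ^ 2 * ‖a‖ ^ 2 + ‖f 0‖ ^ 2) := by
  have hfa : ‖f a - f 0‖ ^ 2 ≤ K ^ 2 * ‖a‖ ^ 2 := by
    rw [← mul_pow]
    exact pow_le_pow_left₀ (norm_nonneg _) (by simpa using hlip a 0) 2
  have hSab : ‖S • (b - a)‖ ^ 2 = S ^ 2 * ‖a - b‖ ^ 2 := by
    rw [norm_smul, mul_pow, norm_eq_abs, sq_abs, norm_sub_rev]
  calc ‖S • (b - a) + f a‖ ^ 2 = ‖S • (b - a) + (f a - f 0) + f 0‖ ^ 2 := by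
        rw [add_assoc, sub_add_cancel]
    _ ≤ 3 * (‖S • (b - a)‖ ^ 2 + ‖f a - f 0‖ ^ 2 + ‖f 0‖ ^ 2) := norm_add_add_sq_le _ _ _
    _ ≤ 3 * (S ^ 2 * ‖a - b‖ ^ 2 + K ^ 2 * ‖a‖ ^ 2 + ‖f 0‖ ^ 2) := by rw [hSab]; linarith

lemma norm_sq_add_norm_sq_coupled_euler_drift_le (hS : 0 ≤ S) (hh : 0 < h) (hh1 : h ≤ 1)
    (hhL : h * (12 * S ^ 2 + 3 * K ^ 2) ≤ α)
    (hlip : ∀ x y, ‖f x - f y‖ ≤ K * ‖x - y‖) (hdiss : ∀ x, ⟪x, f x⟫ ≤ -α * ‖x‖ ^ 2 + β)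
    (a b : E) :
    ‖a + (S * h) • (b - a) + h • f a‖ ^ 2 + ‖b + (S * h) • (a - b) + h • f b‖ ^ 2
      ≤ (1 - α * h) * (‖a‖ ^ 2 + ‖b‖ ^ 2) + (4 * β + 6 * ‖f 0‖ ^ 2) * h := by
  set q := ‖a‖ ^ 2 + ‖b‖ ^ 2
  have hstep : ∀ x y : E, x + (S * h) • (y - x) + h • f x = x + h • (S • (y - x) + f x) :=
    fun x y ↦ by module
  have hcross : ⟪a, S • (b - a) + f a⟫ + ⟪b, S • (a - b) + f b⟫ ≤ -α * q + 2 * β := by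
    rw [inner_add_right, inner_add_right]
    linarith [inner_smul_sub_add_inner_smul_sub S a b, hdiss a, hdiss b,
      mul_nonneg hS (sq_nonneg ‖a - b‖)]
  have hvel : ‖S • (b - a) + f a‖ ^ 2 + ‖S • (a - b) + f b‖ ^ 2
      ≤ (12 * S ^ 2 + 3 * K ^ 2) * q + 6 * ‖f 0‖ ^ 2 := by
    have hva := norm_smul_sub_add_sq_le (S := S) hlip a b
    have hvb := norm_smul_sub_add_sq_le (S := S) hlip b a
    rw [norm_sub_rev b a] at hvb
    nlinarith [norm_sub_sq_le_two_mul a b, sq_nonneg S]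
  rw [hstep, hstep, norm_add_smul_sq, norm_add_smul_sq]
  nlinarith [mul_le_mul_of_nonneg_left hcross hh.le, mul_le_mul_of_nonneg_left hvel (sq_nonneg h),
    mul_le_mul_of_nonneg_right hhL (mul_nonneg hh.le (by positivity : 0 ≤ q)),
    mul_le_mul_of_nonneg_right hh1 (mul_nonneg hh.le (sq_nonneg ‖f 0‖))]

lemma norm_add_sq_add_norm_add_sq (u v w : E) :
    ‖u + w‖ ^ 2 + ‖v + w‖ ^ 2 = (‖u‖ ^ 2 + ‖v‖ ^ 2) + 2 * ⟪u + v, w⟫ + 2 * ‖w‖ ^ 2 := by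
  rw [norm_add_sq_real, norm_add_sq_real, inner_add_left]
  ring

end Deterministic

section Probabilistic

variable {Ω : Type*} [MeasurableSpace Ω] {μ : Measure Ω}

lemma LipschitzWith.memLp_comp {E F : Type*} [NormedAddCommGroup E] [NormedAddCommGroup F]
    [IsFiniteMeasure μ] {K : NNReal} {g : E → F} (hg : LipschitzWith K g) {X : Ω → E}
    {p : ENNReal} (hX : MemLp X p μ) : MemLp (fun ω ↦ g (X ω)) p μ := by
  have hg0 : LipschitzWith (K + 0) (fun x ↦ g x - g 0) := hg.sub (LipschitzWith.const _)
  convert (hg0.comp_memLp (sub_self _) hX).add (memLp_const (g 0)) using 1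
  funext ω
  simp

variable {E : Type*} [NormedAddCommGroup E] [InnerProductSpace ℝ E] [CompleteSpace E]
  [MeasurableSpace E] [BorelSpace E]

lemma integral_norm_add_sq_add_norm_add_sq_of_indepFun [IsFiniteMeasure μ] {U V w : Ω → E}
    (hU : MemLp U 2 μ) (hV : MemLp V 2 μ) (hw : MemLp w 2 μ)
    (hind : IndepFun (fun ω ↦ U ω + V ω) w μ) (hw0 : μ[w] = 0) :
    ∫ ω, (‖U ω + w ω‖ ^ 2 + ‖V ω + w ω‖ ^ 2) ∂μ
      = ∫ ω, (‖U ω‖ ^ 2 + ‖V ω‖ ^ 2) ∂μ + 2 * ∫ ω, ‖w ω‖ ^ 2 ∂μ := by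
  have hsq : ∀ {X : Ω → E}, MemLp X 2 μ → Integrable (fun ω ↦ ‖X ω‖ ^ 2) μ :=
    fun hX ↦ (memLp_two_iff_integrable_sq_norm hX.1).1 hX
  have hUV : Integrable (fun ω ↦ U ω + V ω) μ := (hU.add hV).integrable one_le_two
  have hinner_int : Integrable (fun ω ↦ ⟪U ω + V ω, w ω⟫) μ :=
    hind.integrable_bilin hUV (hw.integrable one_le_two) (innerSL ℝ)
  have hinner : ∫ ω, ⟪U ω + V ω, w ω⟫ ∂μ = 0 := by
    have := hind.integral_bilin hUV (hw.integrable one_le_two) (innerSL ℝ)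
    rwa [hw0, map_zero] at this
  simp only [norm_add_sq_add_norm_add_sq]
  rw [integral_add, integral_add, integral_const_mul, integral_const_mul, hinner, mul_zero, add_zero]
  exacts [(hsq hU).add (hsq hV), hinner_int.const_mul 2,
    ((hsq hU).add (hsq hV)).add (hinner_int.const_mul 2), (hsq hw).const_mul 2]

end Probabilistic

theorem coupled_euler_step_dissipativity_general (m : ℕ) (K alpha' beta' S : ℝ)
    (halpha' : 0 < alpha') (hbeta' : 0 < beta') (hS : 0 < S)
    (f : EuclideanSpace ℝ (Fin m) → EuclideanSpace ℝ (Fin m))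
    (hlip : ∀ x y, ‖f x - f y‖ ≤ K * ‖x - y‖)
    (hdiss : ∀ x, (inner ℝ x (f x) : ℝ) ≤ -alpha' * ‖x‖ ^ 2 + beta') :
    ∃ gam : ℝ, 0 < gam ∧ gam < alpha' ∧ ∃ C' > 0, ∃ h₀ > 0,
      ∀ h : ℝ, 0 < h → h < h₀ → S * h < 1 / 2 →
      ∀ (Ω : Type) [MeasurableSpace Ω] (μ : Measure Ω),
        IsProbabilityMeasure μ →
      ∀ (xf xc w : Ω → EuclideanSpace ℝ (Fin m)),
        Measurable xf → Measurable xc → Measurable w →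
        IndepFun w (fun ω => (xf ω, xc ω)) μ →
        (∫ ω, w ω ∂μ) = 0 →
        (∫ ω, ‖w ω‖ ^ 2 ∂μ) = m * h →
        Integrable (fun ω => ‖xf ω‖ ^ 2) μ →
        Integrable (fun ω => ‖xc ω‖ ^ 2) μ →
        Integrable (fun ω => ‖w ω‖ ^ 2) μ →
        (∫ ω, (‖xc ω + (S * h) • (xf ω - xc ω) + h • f (xc ω) + w ω‖ ^ 2
              + ‖xf ω + (S * h) • (xc ω - xf ω) + h • f (xf ω) + w ω‖ ^ 2) ∂μ)
          ≤ (1 - 2 * gam * h) * (∫ ω, (‖xc ω‖ ^ 2 + ‖xf ω‖ ^ 2) ∂μ)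
            + C' * h := by
  have hf : LipschitzWith (Real.toNNReal K) f :=
    LipschitzWith.of_dist_le' fun x y ↦ by simpa only [dist_eq_norm] using hlip x y
  have hL : 0 < 12 * S ^ 2 + 3 * K ^ 2 := by positivity
  refine ⟨alpha' / 2, by positivity, by linarith, 4 * beta' + 6 * ‖f 0‖ ^ 2 + 2 * m, by positivity,
    min (alpha' / (12 * S ^ 2 + 3 * K ^ 2)) 1, by positivity, ?_⟩
  intro h hh hh₀ _ Ω _ μ _ xf xc w hxf hxc hw hindep hw0 hw2 hIxf hIxc hIw
  have hh1 : h ≤ 1 := (hh₀.trans_le (min_le_right _ _)).le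
  have hhL : h * (12 * S ^ 2 + 3 * K ^ 2) ≤ alpha' :=
    ((lt_div_iff₀ hL).1 (hh₀.trans_le (min_le_left _ _))).le
  have hL2 {X : Ω → EuclideanSpace ℝ (Fin m)} (hX : Measurable X)
      (hIX : Integrable (fun ω ↦ ‖X ω‖ ^ 2) μ) : MemLp X 2 μ :=
    (memLp_two_iff_integrable_sq_norm hX.aestronglyMeasurable).2 hIX
  have hstep {x y : Ω → EuclideanSpace ℝ (Fin m)} (hx : MemLp x 2 μ) (hy : MemLp y 2 μ) :
      MemLp (fun ω ↦ x ω + (S * h) • (y ω - x ω) + h • f (x ω)) 2 μ :=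
    (hx.add ((hy.sub hx).const_smul (S * h))).add ((hf.memLp_comp hx).const_smul h)
  have hfc := hf.continuous
  have hind := hindep.symm.comp
    (by fun_prop : Continuous fun p : EuclideanSpace ℝ (Fin m) × EuclideanSpace ℝ (Fin m) ↦
      (p.2 + (S * h) • (p.1 - p.2) + h • f p.2) + (p.1 + (S * h) • (p.2 - p.1) + h • f p.1)).measurable
    measurable_id
  have hbound : Integrable (fun ω ↦ (1 - alpha' * h) * (‖xc ω‖ ^ 2 + ‖xf ω‖ ^ 2)) μ :=
    (hIxc.add hIxf).const_mul _
  calc _ = ∫ ω, (‖xc ω + (S * h) • (xf ω - xc ω) + h • f (xc ω)‖ ^ 2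
              + ‖xf ω + (S * h) • (xc ω - xf ω) + h • f (xf ω)‖ ^ 2) ∂μ + 2 * (m * h) := by
        rw [← hw2]
        exact integral_norm_add_sq_add_norm_add_sq_of_indepFun
          (hstep (hL2 hxc hIxc) (hL2 hxf hIxf)) (hstep (hL2 hxf hIxf) (hL2 hxc hIxc))
          (hL2 hw hIw) hind hw0
    _ ≤ ∫ ω, ((1 - alpha' * h) * (‖xc ω‖ ^ 2 + ‖xf ω‖ ^ 2) + (4 * beta' + 6 * ‖f 0‖ ^ 2) * h) ∂μ
          + 2 * (m * h) := by
        gcongr ?_ + _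
        exact integral_mono_of_nonneg (.of_forall fun ω ↦ by positivity)
          (hbound.add (integrable_const _)) (.of_forall fun ω ↦
            norm_sq_add_norm_sq_coupled_euler_drift_le hS.le hh hh1 hhL hlip hdiss _ _)
    _ = _ := by
        rw [integral_add hbound (integrable_const _), integral_const_mul, integral_const,
          probReal_univ, one_smul]
        ring

theorem coupled_euler_step_dissipativity (m : ℕ) (K alpha' beta' S : ℝ)
    (hK : 0 < K) (halpha' : 0 < alpha') (hbeta' : 0 < beta') (hS : 0 < S)
    (f : EuclideanSpace ℝ (Fin m) → EuclideanSpace ℝ (Fin m))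
    (hlip : ∀ x y, ‖f x - f y‖ ≤ K * ‖x - y‖)
    (hdiss : ∀ x, (inner ℝ x (f x) : ℝ) ≤ -alpha' * ‖x‖ ^ 2 + beta') :
    ∃ gam : ℝ, 0 < gam ∧ gam < alpha' ∧ ∃ C' > 0, ∃ h₀ > 0,
      ∀ h : ℝ, 0 < h → h < h₀ → S * h < 1 / 2 →
      ∀ (Ω : Type) [MeasurableSpace Ω] (μ : Measure Ω),
        IsProbabilityMeasure μ →
      ∀ (xf xc w : Ω → EuclideanSpace ℝ (Fin m)),
        Measurable xf → Measurable xc → Measurable w →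
        IndepFun w (fun ω => (xf ω, xc ω)) μ →
        (∫ ω, w ω ∂μ) = 0 →
        (∫ ω, ‖w ω‖ ^ 2 ∂μ) = m * h →
        Integrable (fun ω => ‖xf ω‖ ^ 2) μ →
        Integrable (fun ω => ‖xc ω‖ ^ 2) μ →
        Integrable (fun ω => ‖w ω‖ ^ 2) μ →
        (∫ ω, (‖xc ω + (S * h) • (xf ω - xc ω) + h • f (xc ω) + w ω‖ ^ 2
              + ‖xf ω + (S * h) • (xc ω - xf ω) + h • f (xf ω) + w ω‖ ^ 2) ∂μ)
          ≤ (1 - 2 * gam * h) * (∫ ω, (‖xc ω‖ ^ 2 + ‖xf ω‖ ^ 2) ∂μ)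
            + C' * h :=
  coupled_euler_step_dissipativity_general m K alpha' beta' S halpha' hbeta' hS f hlip hdiss
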